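/- arXiv:1601.05116 — 3 statements merged into one kernel-verified Lean document; each statement's English description precedes it below -/
import Mathlib

section
/- Gaussian product split identity: for σ > 0, x, y ∈ ℝ² with x ≠ 0, and s ∈ ℝ, e^s · k_σ(y + (1+s)x) = k_σ(x + y) · k_{σ/‖x‖}(1 + (xᵀy - σ²)/‖x‖²)^{-1} · k_{σ/‖x‖}(s + 1 + (xᵀy - σ²)/‖x‖²), where the first k is the 2D isotropic Gaussian kernel k_σ(v) = (2πσ²)^{-1} exp(-‖v‖²/(2σ²)) and the latter two are 1D Gaussian kernels k_σ(t) = (2πσ²)^{-1/2} exp(-t²/(2σ²)). -/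
open RealInnerProductSpace

/-- d-dimensional isotropic Gaussian kernel. -/
noncomputable def gauss (d : ℕ) (σ : ℝ) (v : EuclideanSpace ℝ (Fin d)) : ℝ :=
  (2 * Real.pi * σ ^ 2) ^ (-(d : ℝ) / 2) * Real.exp (-‖v‖ ^ 2 / (2 * σ ^ 2))

/-- 1D Gaussian kernel. -/
noncomputable def gauss1 (σ t : ℝ) : ℝ :=
  (2 * Real.pi * σ ^ 2) ^ (-(1 : ℝ) / 2) * Real.exp (-t ^ 2 / (2 * σ ^ 2))

theorem gaussian_product_split (σ : ℝ) (hσ : 0 < σ)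
    (x y : EuclideanSpace ℝ (Fin 2)) (hx : x ≠ 0) (s : ℝ) :
    Real.exp s * gauss 2 σ (y + (1 + s) • x)
      = gauss 2 σ (x + y)
        * (gauss1 (σ / ‖x‖) (1 + (⟪x, y⟫ - σ ^ 2) / ‖x‖ ^ 2))⁻¹
        * gauss1 (σ / ‖x‖) (s + 1 + (⟪x, y⟫ - σ ^ 2) / ‖x‖ ^ 2) := by
  have hnx : (0:ℝ) < ‖x‖ := norm_pos_iff.mpr hx
  set N : ℝ := ‖x‖ ^ 2 with hN
  set Y : ℝ := ‖y‖ ^ 2 with hY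
  set I : ℝ := ⟪x, y⟫ with hI
  have hN0 : N ≠ 0 := by positivity
  have hσ0 : σ ≠ 0 := ne_of_gt hσ
  have h1 : ‖y + (1 + s) • x‖ ^ 2 = Y + 2 * (1 + s) * I + (1 + s) ^ 2 * N := by
    rw [@norm_add_sq_real, norm_smul, real_inner_smul_right, real_inner_comm]
    simp only [hN, hY, hI, mul_pow, Real.norm_eq_abs, sq_abs]
    ring
  have h2 : ‖x + y‖ ^ 2 = N + 2 * I + Y := by
    rw [@norm_add_sq_real]
  simp only [gauss, gauss1, h1, h2]
  set C : ℝ := (2 * Real.pi * σ ^ 2) ^ (-((2:ℕ) : ℝ) / 2) with hC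
  set D : ℝ := (2 * Real.pi * (σ / ‖x‖) ^ 2) ^ (-(1:ℝ) / 2) with hD
  have hD0 : D ≠ 0 := by
    have : (0:ℝ) < 2 * Real.pi * (σ / ‖x‖) ^ 2 := by positivity
    exact ne_of_gt (Real.rpow_pos_of_pos this _)
  set τ : ℝ := (σ / ‖x‖) ^ 2 with hτd
  have hτ : τ = σ ^ 2 / N := by rw [hτd, div_pow, hN]
  set A := Real.exp (-(Y + 2 * (1 + s) * I + (1 + s) ^ 2 * N) / (2 * σ ^ 2)) with hA
  set B := Real.exp (-(N + 2 * I + Y) / (2 * σ ^ 2)) with hB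
  set P := Real.exp (-(1 + (I - σ ^ 2) / N) ^ 2 / (2 * τ)) with hP
  set Q := Real.exp (-(s + 1 + (I - σ ^ 2) / N) ^ 2 / (2 * τ)) with hQ
  have key : Real.exp s * A = B * P⁻¹ * Q := by
    rw [hA, hB, hP, hQ, ← Real.exp_neg, ← Real.exp_add, ← Real.exp_add, ← Real.exp_add]
    congr 1
    rw [hτ]
    field_simp
    ring
  calc Real.exp s * (C * A) = C * (Real.exp s * A) := by ring
    _ = C * (B * P⁻¹ * Q) := by rw [key]
    _ = C * B * (D * P)⁻¹ * (D * Q) := by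
        rw [mul_inv]
        rw [show C * B * (D⁻¹ * P⁻¹) * (D * Q) = C * (B * P⁻¹ * Q) * (D⁻¹ * D) by ring,
          inv_mul_cancel₀ hD0, mul_one]
end

section
/- Closed form for scale-linearized domain-size pooling: for σ, σ_s > 0, x, y, b ∈ ℝ² with x ≠ 0, and rotation matrix R_α, the convolution in s of the function s ↦ e^s k_σ(y - (1+s) R_α x - b) with the 1D Gaussian k_{σ_s} equals k_σ(y - R_α x - b) · k_{σ/‖x‖}(1 + ((R_α x)ᵀ(b-y) - σ²)/‖x‖²)^{-1} · k_{√(σ_s² + σ²/‖x‖²)}(s + 1 + ((R_α x)ᵀ(b-y) - σ²)/‖x‖²). -/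
/-!
Write `u = R x` and `v = y - b`; then `‖u‖ = ‖x‖` since `R` is orthogonal. The exponent of
`e^r k_σ(v - (1 + r) u)` is quadratic in `r` with leading coefficient `-‖u‖² / (2σ²)`, so completing
the square turns this factor into a constant times the one-dimensional Gaussian `k_{σ/‖x‖}` centred
at `-(1 + (⟪u, -v⟫ - σ²)/‖u‖²)`. The integral is then a convolution of two centred 1D Gaussians,
which is the Gaussian whose variance is the sum of the two variances.
-/

open MeasureTheory RealInnerProductSpace

open Real

lemma norm_sub_smul_sq {E : Type*} [NormedAddCommGroup E] [InnerProductSpace ℝ E]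
    (v u : E) (q : ℝ) : ‖v - q • u‖ ^ 2 = ‖v‖ ^ 2 + 2 * q * ⟪u, -v⟫ + q ^ 2 * ‖u‖ ^ 2 := by
  rw [norm_sub_sq_real, inner_neg_right, real_inner_smul_right, real_inner_comm, norm_smul,
    mul_pow, Real.norm_eq_abs, sq_abs]
  ring

lemma norm_toEuclideanLin_of_mem_orthogonalGroup {n : Type*} [Fintype n] [DecidableEq n]
    {R : Matrix n n ℝ} (hR : R ∈ Matrix.orthogonalGroup n ℝ) (x : EuclideanSpace ℝ n) :
    ‖Matrix.toEuclideanLin R x‖ = ‖x‖ :=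
  ContinuousLinearMap.norm_map_of_mem_unitary
    (Unitary.map_mem (Matrix.toEuclideanCLM (n := n) (𝕜 := ℝ)) hR) x

lemma gauss1_eq_inv_sqrt_mul_exp (σ t : ℝ) :
    gauss1 σ t = (√(2 * π * σ ^ 2))⁻¹ * exp (-t ^ 2 / (2 * σ ^ 2)) := by
  rw [gauss1, sqrt_eq_rpow, ← rpow_neg (by positivity)]
  norm_num

lemma exp_mul_gauss_sub_one_add_smul {d : ℕ} {σ : ℝ} (hσ : σ ≠ 0) {u : EuclideanSpace ℝ (Fin d)}
    (hu : u ≠ 0) (v : EuclideanSpace ℝ (Fin d)) (r : ℝ) :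
    exp r * gauss d σ (v - (1 + r) • u)
      = gauss d σ (v - u) * (gauss1 (σ / ‖u‖) (1 + (⟪u, -v⟫ - σ ^ 2) / ‖u‖ ^ 2))⁻¹
        * gauss1 (σ / ‖u‖) (r + (1 + (⟪u, -v⟫ - σ ^ 2) / ‖u‖ ^ 2)) := by
  have hn : ‖u‖ ≠ 0 := norm_ne_zero_iff.mpr hu
  have hK : (2 * π * (σ / ‖u‖) ^ 2) ^ (-(1 : ℝ) / 2) ≠ 0 := by positivity
  have hexp : r + -‖v - (1 + r) • u‖ ^ 2 / (2 * σ ^ 2)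
      = -‖v - u‖ ^ 2 / (2 * σ ^ 2)
        - -(1 + (⟪u, -v⟫ - σ ^ 2) / ‖u‖ ^ 2) ^ 2 / (2 * (σ / ‖u‖) ^ 2)
        + -(r + (1 + (⟪u, -v⟫ - σ ^ 2) / ‖u‖ ^ 2)) ^ 2 / (2 * (σ / ‖u‖) ^ 2) := by
    rw [← one_smul ℝ u, norm_sub_smul_sq, norm_sub_smul_sq, one_smul]
    field_simp
    ring
  unfold gauss gauss1
  rw [mul_left_comm, ← exp_add, hexp, exp_add, exp_sub]
  field_simp

lemma integral_gauss1_sub_mul_gauss1 {a b : ℝ} (ha : a ≠ 0) (hb : b ≠ 0) (w : ℝ) :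
    ∫ t, gauss1 a (w - t) * gauss1 b t = gauss1 √(a ^ 2 + b ^ 2) w := by
  have hab : 0 < a ^ 2 + b ^ 2 := by positivity
  set β := (a ^ 2 + b ^ 2) / (2 * a ^ 2 * b ^ 2)
  set m := b ^ 2 * w / (a ^ 2 + b ^ 2)
  have hsquare (t : ℝ) : -(w - t) ^ 2 / (2 * a ^ 2) + -t ^ 2 / (2 * b ^ 2)
      = -w ^ 2 / (2 * (a ^ 2 + b ^ 2)) + -β * (t - m) ^ 2 := by
    simp only [β, m]
    field_simp
    ring
  have hint : ∫ t, exp (-β * (t - m) ^ 2) = √(π / β) := by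
    rw [integral_sub_right_eq_self (fun t => exp (-β * t ^ 2)) m, integral_gaussian]
  have hconst : (√(2 * π * a ^ 2))⁻¹ * (√(2 * π * b ^ 2))⁻¹ * √(π / β)
      = (√(2 * π * (a ^ 2 + b ^ 2)))⁻¹ := by
    rw [← mul_inv, ← sqrt_mul (by positivity), ← sqrt_inv, ← sqrt_inv, ← sqrt_mul (by positivity)]
    congr 1
    simp only [β]
    field_simp
  simp_rw [gauss1_eq_inv_sqrt_mul_exp, sq_sqrt hab.le]
  calc ∫ t, (√(2 * π * a ^ 2))⁻¹ * exp (-(w - t) ^ 2 / (2 * a ^ 2))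
          * ((√(2 * π * b ^ 2))⁻¹ * exp (-t ^ 2 / (2 * b ^ 2)))
      = ∫ t, (√(2 * π * a ^ 2))⁻¹ * (√(2 * π * b ^ 2))⁻¹
          * exp (-w ^ 2 / (2 * (a ^ 2 + b ^ 2))) * exp (-β * (t - m) ^ 2) := by
        congr 1 with t
        rw [mul_assoc _ (exp _) (exp _), ← exp_add, ← hsquare, exp_add]
        ring
    _ = _ := by rw [integral_const_mul, hint, ← hconst]; ring

theorem dsp_linearized_closed_form_general (σ σs : ℝ) (hσ : 0 < σ) (hσs : 0 < σs)
    (x y b : EuclideanSpace ℝ (Fin 2)) (hx : x ≠ 0)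
    (R : Matrix (Fin 2) (Fin 2) ℝ)
    (hR : R ∈ Matrix.orthogonalGroup (Fin 2) ℝ) (s : ℝ) :
    (∫ t : ℝ,
        (Real.exp (s - t)
          * gauss 2 σ (y - (1 + (s - t)) • (Matrix.toEuclideanLin R x) - b))
        * gauss1 σs t)
      = gauss 2 σ (y - Matrix.toEuclideanLin R x - b)
        * (gauss1 (σ / ‖x‖)
            (1 + (⟪Matrix.toEuclideanLin R x, b - y⟫ - σ ^ 2) / ‖x‖ ^ 2))⁻¹
        * gauss1 (Real.sqrt (σs ^ 2 + σ ^ 2 / ‖x‖ ^ 2))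
            (s + 1 + (⟪Matrix.toEuclideanLin R x, b - y⟫ - σ ^ 2) / ‖x‖ ^ 2) := by
  set u := Matrix.toEuclideanLin R x
  have hux : ‖u‖ = ‖x‖ := norm_toEuclideanLin_of_mem_orthogonalGroup hR x
  have hx' : ‖x‖ ≠ 0 := norm_ne_zero_iff.mpr hx
  have hu : u ≠ 0 := by rwa [← norm_ne_zero_iff, hux]
  set c := 1 + (⟪u, b - y⟫ - σ ^ 2) / ‖x‖ ^ 2
  have hfactor (t : ℝ) : exp (s - t) * gauss 2 σ (y - (1 + (s - t)) • u - b)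
      = gauss 2 σ (y - u - b) * (gauss1 (σ / ‖x‖) c)⁻¹ * gauss1 (σ / ‖x‖) (s + c - t) := by
    rw [sub_right_comm, exp_mul_gauss_sub_one_add_smul hσ.ne' hu, neg_sub, hux,
      sub_right_comm y u b, sub_add_eq_add_sub]
  simp_rw [hfactor, mul_assoc, integral_const_mul,
    integral_gauss1_sub_mul_gauss1 (div_ne_zero hσ.ne' hx') hσs.ne',
    div_pow, add_comm ((σ ^ 2) / _), c, add_assoc]

theorem dsp_linearized_closed_form (σ σs : ℝ) (hσ : 0 < σ) (hσs : 0 < σs)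
    (x y b : EuclideanSpace ℝ (Fin 2)) (hx : x ≠ 0)
    (R : Matrix (Fin 2) (Fin 2) ℝ)
    (hR : R ∈ Matrix.orthogonalGroup (Fin 2) ℝ) (hdet : R.det = 1) (s : ℝ) :
    (∫ t : ℝ,
        (Real.exp (s - t)
          * gauss 2 σ (y - (1 + (s - t)) • (Matrix.toEuclideanLin R x) - b))
        * gauss1 σs t)
      = gauss 2 σ (y - Matrix.toEuclideanLin R x - b)
        * (gauss1 (σ / ‖x‖)
            (1 + (⟪Matrix.toEuclideanLin R x, b - y⟫ - σ ^ 2) / ‖x‖ ^ 2))⁻¹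
        * gauss1 (Real.sqrt (σs ^ 2 + σ ^ 2 / ‖x‖ ^ 2))
            (s + 1 + (⟪Matrix.toEuclideanLin R x, b - y⟫ - σ ^ 2) / ‖x‖ ^ 2) :=
  dsp_linearized_closed_form_general σ σs hσ hσs x y b hx R hR s
end

section
/- Half-line second moment against a product of 1D and 2D Gaussians: for σ₁, σ₂ > 0, c₁, c₂ ∈ ℝ, c₃, c₄ ∈ ℝ² with (c₁, c₃) ≠ (0, 0), ∫₀^∞ r² k_{σ₁}(r c₁ + c₂) k_{σ₂}(r c₃ + c₄) dr = e^{-c₂²/(2σ₁²) - ‖c₄‖²/(2σ₂²)} (√π (1 + 2t₂²) e^{t₂²} erfc(t₂) - 2t₂) / (8√2 π^{3/2} σ₁ σ₂² t₁³), where t₁ = √(c₁²/(2σ₁²) + ‖c₃‖²/(2σ₂²)) and t₂ = (c₁c₂/σ₁² + c₃ᵀc₄/σ₂²)/(2t₁). -/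
open MeasureTheory RealInnerProductSpace

/-- The Gauss error function. -/
noncomputable def erf (x : ℝ) : ℝ :=
  (2 / Real.sqrt Real.pi) * ∫ t in (0 : ℝ)..x, Real.exp (-t ^ 2)

/-- The complementary error function. -/
noncomputable def erfc (x : ℝ) : ℝ := 1 - erf x

/-!
Completing the square in `r` turns the integrand into a constant times
`r ^ 2 * exp (-(t₁ * r + t₂) ^ 2)`. After the substitution `u = t₁ * r + t₂` this is
`t₁⁻³ * ∫ u in Ioi t₂, (u - t₂) ^ 2 * exp (-u ^ 2)`, which is evaluated with the explicit primitive
`(t₂ ^ 2 + 1 / 2) * (√π / 2) * erf u - (u - 2 * t₂) / 2 * exp (-u ^ 2)`.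
-/

open Filter Set Real Topology

theorem hasDerivAt_erf (x : ℝ) : HasDerivAt erf (2 / √π * exp (-x ^ 2)) x :=
  ((Continuous.integral_hasStrictDerivAt (by fun_prop) 0 x).hasDerivAt).const_mul _

theorem tendsto_erf_atTop : Tendsto erf atTop (𝓝 1) := by
  have hint : IntegrableOn (fun t : ℝ => exp (-t ^ 2)) (Ioi 0) := by
    simpa using (integrable_exp_neg_mul_sq one_pos).integrableOn
  have hlim := (intervalIntegral_tendsto_integral_Ioi 0 hint tendsto_id).const_mul (2 / √π)
  have hgauss : ∫ t in Ioi (0 : ℝ), exp (-t ^ 2) = √π / 2 := by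
    simpa using integral_gaussian_Ioi 1
  have hπ : √π ≠ 0 := by positivity
  rwa [hgauss, show 2 / √π * (√π / 2) = 1 by field_simp] at hlim

theorem tendsto_mul_exp_neg_sq_atTop : Tendsto (fun u : ℝ => u * exp (-u ^ 2)) atTop (𝓝 0) := by
  refine ((tendsto_rpow_abs_mul_exp_neg_mul_sq_cocompact one_pos 1).mono_left
    atTop_le_cocompact).congr' ?_
  filter_upwards [eventually_ge_atTop 0] with u hu
  simp [abs_of_nonneg hu]

noncomputable def subSqMulExpNegSqPrimitive (b u : ℝ) : ℝ :=
  (b ^ 2 + 1 / 2) * (√π / 2) * erf u - (u - 2 * b) / 2 * exp (-u ^ 2)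

theorem hasDerivAt_subSqMulExpNegSqPrimitive (b u : ℝ) :
    HasDerivAt (subSqMulExpNegSqPrimitive b) ((u - b) ^ 2 * exp (-u ^ 2)) u := by
  have hexp : HasDerivAt (fun u : ℝ => exp (-u ^ 2)) (exp (-u ^ 2) * (-(2 * u))) u :=
    ((hasDerivAt_pow 2 u).neg.congr_deriv (by ring)).exp
  have hlin : HasDerivAt (fun u : ℝ => (u - 2 * b) / 2) (1 / 2) u :=
    ((hasDerivAt_id u).sub_const (2 * b)).div_const 2
  have hπ : √π ≠ 0 := by positivity
  refine (((hasDerivAt_erf u).const_mul _).sub (hlin.mul hexp)).congr_deriv ?_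
  field_simp
  ring

theorem tendsto_subSqMulExpNegSqPrimitive_atTop (b : ℝ) :
    Tendsto (subSqMulExpNegSqPrimitive b) atTop (𝓝 ((b ^ 2 + 1 / 2) * (√π / 2))) := by
  have hexp : Tendsto (fun u : ℝ => exp (-u ^ 2)) atTop (𝓝 0) :=
    tendsto_exp_neg_atTop_nhds_zero.comp (tendsto_pow_atTop two_ne_zero)
  have hdecay : Tendsto (fun u : ℝ => (u - 2 * b) / 2 * exp (-u ^ 2)) atTop (𝓝 0) := by
    simpa using ((tendsto_mul_exp_neg_sq_atTop.sub (hexp.const_mul (2 * b))).div_const 2).congr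
      fun u => by ring
  unfold subSqMulExpNegSqPrimitive
  simpa using (tendsto_erf_atTop.const_mul ((b ^ 2 + 1 / 2) * (√π / 2))).sub hdecay

theorem integrable_sq_mul_exp_neg_affine_sq {a : ℝ} (ha : a ≠ 0) (b : ℝ) :
    Integrable (fun r : ℝ => r ^ 2 * exp (-(a * r + b) ^ 2)) := by
  have h0 : Integrable (fun u : ℝ => exp (-u ^ 2)) := by
    simpa using integrable_exp_neg_mul_sq one_pos
  have h1 : Integrable (fun u : ℝ => u * exp (-u ^ 2)) := by
    simpa using integrable_mul_exp_neg_mul_sq one_pos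
  have h2 : Integrable (fun u : ℝ => u ^ 2 * exp (-u ^ 2)) := by
    simpa [rpow_two] using integrable_rpow_mul_exp_neg_mul_sq one_pos (s := 2) (by norm_num)
  have hsub : Integrable (fun u : ℝ => (u - b) ^ 2 * exp (-u ^ 2) / a ^ 2) := by
    refine (((h2.sub (h1.const_mul (2 * b))).add (h0.const_mul (b ^ 2))).div_const (a ^ 2)).congr
      (.of_forall fun u => ?_)
    simp only [Pi.add_apply, Pi.sub_apply]
    ring
  refine ((hsub.comp_add_right b).comp_mul_left' ha).congr (.of_forall fun r => ?_)
  field_simp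
  ring

theorem integral_Ioi_sq_mul_exp_neg_affine_sq {a : ℝ} (ha : 0 < a) (b : ℝ) :
    ∫ r in Ioi (0 : ℝ), r ^ 2 * exp (-(a * r + b) ^ 2)
      = ((1 + 2 * b ^ 2) * √π * erfc b - 2 * b * exp (-b ^ 2)) / (4 * a ^ 3) := by
  have hderiv : ∀ r ∈ Ici (0 : ℝ),
      HasDerivAt (fun r => subSqMulExpNegSqPrimitive b (a * r + b) / a ^ 3)
        (r ^ 2 * exp (-(a * r + b) ^ 2)) r := fun r _ => by
    have hlin : HasDerivAt (fun r : ℝ => a * r + b) a r := by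
      simpa using ((hasDerivAt_id r).const_mul a).add_const b
    refine (((hasDerivAt_subSqMulExpNegSqPrimitive b _).comp r hlin).div_const _).congr_deriv ?_
    field_simp
    ring
  have hlim := ((tendsto_subSqMulExpNegSqPrimitive_atTop b).comp
    (tendsto_atTop_add_const_right atTop b (tendsto_id.const_mul_atTop ha))).div_const (a ^ 3)
  rw [integral_Ioi_of_hasDerivAt_of_tendsto' hderiv
    (integrable_sq_mul_exp_neg_affine_sq ha.ne' b).integrableOn hlim]
  simp only [subSqMulExpNegSqPrimitive, erfc, mul_zero, zero_add]
  ring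

theorem gaussian_exponent_complete_square {E : Type*} [NormedAddCommGroup E] [InnerProductSpace ℝ E]
    {σ₁ σ₂ c₁ c₂ t₁ t₂ : ℝ} {c₃ c₄ : E}
    (ht₁ : t₁ ^ 2 = c₁ ^ 2 / (2 * σ₁ ^ 2) + ‖c₃‖ ^ 2 / (2 * σ₂ ^ 2))
    (ht₂ : 2 * t₁ * t₂ = c₁ * c₂ / σ₁ ^ 2 + ⟪c₃, c₄⟫ / σ₂ ^ 2) (r : ℝ) :
    -(r * c₁ + c₂) ^ 2 / (2 * σ₁ ^ 2) + -‖r • c₃ + c₄‖ ^ 2 / (2 * σ₂ ^ 2)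
      = (t₂ ^ 2 + (-c₂ ^ 2 / (2 * σ₁ ^ 2) - ‖c₄‖ ^ 2 / (2 * σ₂ ^ 2))) + -(t₁ * r + t₂) ^ 2 := by
  rw [norm_add_sq_real, norm_smul, real_inner_smul_left, mul_pow, norm_eq_abs, sq_abs]
  linear_combination r ^ 2 * ht₁ + r * ht₂

theorem gauss1_mul_gauss_affine {d : ℕ} {σ₁ σ₂ c₁ c₂ t₁ t₂ : ℝ}
    {c₃ c₄ : EuclideanSpace ℝ (Fin d)}
    (ht₁ : t₁ ^ 2 = c₁ ^ 2 / (2 * σ₁ ^ 2) + ‖c₃‖ ^ 2 / (2 * σ₂ ^ 2))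
    (ht₂ : 2 * t₁ * t₂ = c₁ * c₂ / σ₁ ^ 2 + ⟪c₃, c₄⟫ / σ₂ ^ 2) (r : ℝ) :
    gauss1 σ₁ (r * c₁ + c₂) * gauss d σ₂ (r • c₃ + c₄)
      = (2 * π * σ₁ ^ 2) ^ (-(1 : ℝ) / 2) * (2 * π * σ₂ ^ 2) ^ (-(d : ℝ) / 2)
        * exp (t₂ ^ 2 + (-c₂ ^ 2 / (2 * σ₁ ^ 2) - ‖c₄‖ ^ 2 / (2 * σ₂ ^ 2)))
        * exp (-(t₁ * r + t₂) ^ 2) := by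
  have hexp := congrArg exp (gaussian_exponent_complete_square ht₁ ht₂ r)
  rw [exp_add, exp_add] at hexp
  simp only [gauss1, gauss]
  linear_combination (2 * π * σ₁ ^ 2) ^ (-(1 : ℝ) / 2) * (2 * π * σ₂ ^ 2) ^ (-(d : ℝ) / 2) * hexp

theorem gauss1_mul_gauss_two_normalization {σ₁ : ℝ} (hσ₁ : 0 < σ₁) (σ₂ : ℝ) :
    (2 * π * σ₁ ^ 2) ^ (-(1 : ℝ) / 2) * (2 * π * σ₂ ^ 2) ^ (-((2 : ℕ) : ℝ) / 2)
      = (2 * √2 * π ^ ((3 : ℝ) / 2) * σ₁ * σ₂ ^ 2)⁻¹ := by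
  rw [show -(1 : ℝ) / 2 = -(1 / 2) by norm_num, rpow_neg (by positivity), ← sqrt_eq_rpow,
    sqrt_mul (by positivity), sqrt_mul zero_le_two, sqrt_sq hσ₁.le,
    show -((2 : ℕ) : ℝ) / 2 = -1 by norm_num, rpow_neg_one,
    show (3 : ℝ) / 2 = 1 + 1 / 2 by norm_num, rpow_add pi_pos, rpow_one, ← sqrt_eq_rpow]
  ring

theorem sq_div_add_norm_sq_div_pos {E : Type*} [NormedAddCommGroup E] {σ₁ σ₂ c₁ : ℝ}
    (hσ₁ : σ₁ ≠ 0) (hσ₂ : σ₂ ≠ 0) {c₃ : E} (hne : ¬(c₁ = 0 ∧ c₃ = 0)) :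
    0 < c₁ ^ 2 / (2 * σ₁ ^ 2) + ‖c₃‖ ^ 2 / (2 * σ₂ ^ 2) := by
  rcases not_and_or.mp hne with hc₁ | hc₃
  · exact add_pos_of_pos_of_nonneg (by positivity) (by positivity)
  · exact add_pos_of_nonneg_of_pos (by positivity) (by positivity)

theorem half_line_second_moment_product (σ₁ σ₂ c₁ c₂ : ℝ)
    (hσ₁ : 0 < σ₁) (hσ₂ : 0 < σ₂)
    (c₃ c₄ : EuclideanSpace ℝ (Fin 2)) (hne : ¬(c₁ = 0 ∧ c₃ = 0))
    (t₁ t₂ : ℝ)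
    (ht₁ : t₁ = Real.sqrt (c₁ ^ 2 / (2 * σ₁ ^ 2) + ‖c₃‖ ^ 2 / (2 * σ₂ ^ 2)))
    (ht₂ : t₂ = (c₁ * c₂ / σ₁ ^ 2 + ⟪c₃, c₄⟫ / σ₂ ^ 2) / (2 * t₁)) :
    ∫ r in Set.Ioi (0 : ℝ), r ^ 2 * gauss1 σ₁ (r * c₁ + c₂) * gauss 2 σ₂ (r • c₃ + c₄)
      = Real.exp (-c₂ ^ 2 / (2 * σ₁ ^ 2) - ‖c₄‖ ^ 2 / (2 * σ₂ ^ 2))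
        * (Real.sqrt Real.pi * (1 + 2 * t₂ ^ 2) * Real.exp (t₂ ^ 2) * erfc t₂ - 2 * t₂)
        / (8 * Real.sqrt 2 * Real.pi ^ ((3 : ℝ) / 2) * σ₁ * σ₂ ^ 2 * t₁ ^ 3) := by
  have hs := sq_div_add_norm_sq_div_pos hσ₁.ne' hσ₂.ne' hne
  have ht₁pos : 0 < t₁ := ht₁ ▸ sqrt_pos.mpr hs
  have ht₁sq : t₁ ^ 2 = c₁ ^ 2 / (2 * σ₁ ^ 2) + ‖c₃‖ ^ 2 / (2 * σ₂ ^ 2) := ht₁ ▸ sq_sqrt hs.le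
  have ht₁t₂ : 2 * t₁ * t₂ = c₁ * c₂ / σ₁ ^ 2 + ⟪c₃, c₄⟫ / σ₂ ^ 2 := by
    rw [ht₂]; field_simp
  set E := -c₂ ^ 2 / (2 * σ₁ ^ 2) - ‖c₄‖ ^ 2 / (2 * σ₂ ^ 2)
  have hintegrand (r : ℝ) : r ^ 2 * gauss1 σ₁ (r * c₁ + c₂) * gauss 2 σ₂ (r • c₃ + c₄)
      = (2 * √2 * π ^ ((3 : ℝ) / 2) * σ₁ * σ₂ ^ 2)⁻¹ * exp (t₂ ^ 2 + E)
        * (r ^ 2 * exp (-(t₁ * r + t₂) ^ 2)) := by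
    rw [mul_assoc, gauss1_mul_gauss_affine ht₁sq ht₁t₂, gauss1_mul_gauss_two_normalization hσ₁]
    ring
  simp_rw [hintegrand]
  rw [integral_const_mul, integral_Ioi_sq_mul_exp_neg_affine_sq ht₁pos, exp_add]
  have hexp_cancel : exp (t₂ ^ 2) * exp (-t₂ ^ 2) = 1 := by rw [← exp_add]; simp
  field_simp
  linear_combination (-16 * t₂) * hexp_cancel
end
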